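/- For every 4-connected configuration C and every cell p=(a,b) of C, C admits a closed embroidery whose first diagonal is the inferior diagonal of p traversed from (a,b) to (a+1,b+1); in particular, a 4-connected configuration can be embroidered with minimal thread starting from any one of its cells. -/

import Mathlib

/-- Two vertices of `ℤ²` are adjacent if their Euclidean distance is `1`. -/
def Adj (u v : ℤ × ℤ) : Prop := (u.1 - v.1) ^ 2 + (u.2 - v.2) ^ 2 = 1

/-- The inferior diagonal of the cell `(a, b)`: the unordered pair `{(a,b), (a+1,b+1)}`. -/
def infDiag (c : ℤ × ℤ) : Sym2 (ℤ × ℤ) := s(c, (c.1 + 1, c.2 + 1))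

/-- The superior diagonal of the cell `(a, b)`: the unordered pair `{(a,b+1), (a+1,b)}`. -/
def supDiag (c : ℤ × ℤ) : Sym2 (ℤ × ℤ) := s((c.1, c.2 + 1), (c.1 + 1, c.2))

/-- The unordered pair underlying an ordered pair of vertices. -/
def diagOf (e : (ℤ × ℤ) × (ℤ × ℤ)) : Sym2 (ℤ × ℤ) := s(e.1, e.2)

/-- `d 0, d 1, …, d (2n - 1)` (with `n = C.card`) is an embroidery of the
configuration `C`. -/
def IsEmbroidery (C : Finset (ℤ × ℤ)) (d : ℕ → (ℤ × ℤ) × (ℤ × ℤ)) : Prop :=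
  (∀ i < 2 * C.card, ∃ c ∈ C, diagOf (d i) = infDiag c ∨ diagOf (d i) = supDiag c) ∧
  (∀ c ∈ C, ∃! i, i < 2 * C.card ∧ diagOf (d i) = infDiag c) ∧
  (∀ c ∈ C, ∃! i, i < 2 * C.card ∧ diagOf (d i) = supDiag c) ∧
  (∀ c ∈ C, ∀ i j, i < 2 * C.card → j < 2 * C.card →
    diagOf (d i) = infDiag c → diagOf (d j) = supDiag c → i < j) ∧
  (∀ i, i + 1 < 2 * C.card → Adj (d i).2 (d (i + 1)).1)

/-- A closed embroidery: moreover the end of the last diagonal is adjacent to the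
start of the first one. -/
def IsClosedEmbroidery (C : Finset (ℤ × ℤ)) (d : ℕ → (ℤ × ℤ) × (ℤ × ℤ)) : Prop :=
  IsEmbroidery C d ∧ Adj (d (2 * C.card - 1)).2 (d 0).1

/-- A configuration is brodable if it admits an embroidery. -/
def Brodable (C : Finset (ℤ × ℤ)) : Prop := ∃ d, IsEmbroidery C d

/-- A configuration is strongly brodable if it admits a closed embroidery. -/
def StronglyBrodable (C : Finset (ℤ × ℤ)) : Prop := ∃ d, IsClosedEmbroidery C d

/-- Two cells are 4-adjacent if they differ by `(±1, 0)` or `(0, ±1)`. -/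
def FourAdj (p q : ℤ × ℤ) : Prop := (p.1 - q.1) ^ 2 + (p.2 - q.2) ^ 2 = 1

/-- A configuration is 4-connected if it is nonempty and any two of its cells
are joined by a chain of cells of the configuration in which consecutive cells
are 4-adjacent. -/
def FourConnected (C : Finset (ℤ × ℤ)) : Prop :=
  C.Nonempty ∧ ∀ p ∈ C, ∀ q ∈ C,
    Relation.ReflTransGen (fun a b => a ∈ C ∧ b ∈ C ∧ FourAdj a b) p q

/-!
Remove a cell `p` from a 4-connected configuration. Every remaining cell is joined to one of the
4-neighbours of `p`, so the rest splits into at most four 4-connected components, each containing a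
neighbour of `p`. By induction each component has an open embroidery that starts with the inferior
and ends with the superior diagonal of that neighbour; the embroidery of the whole configuration is
the inferior diagonal of `p`, these embroideries one after another, and the superior diagonal of
`p`. The direction in which a diagonal is traversed depends only on the side from which its cell
is entered (`infStitch`, `supStitch`), and with this choice every junction, including the one that
closes the embroidery, is a unit step.
-/

namespace List

variable {α : Type*} {l : List α}

theorem Nodup.existsUnique_getD_eq (hl : l.Nodup) {a : α} (ha : a ∈ l) (d : α) :
    ∃! i, i < l.length ∧ l.getD i d = a := by
  obtain ⟨i, hi, rfl⟩ := getElem_of_mem ha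
  refine ⟨i, ⟨hi, getD_eq_getElem _ _ hi⟩, ?_⟩
  rintro j ⟨hj, hja⟩
  rw [getD_eq_getElem _ _ hj] at hja
  exact hl.getElem_inj_iff.mp hja

theorem Nodup.lt_of_pair_sublist (hl : l.Nodup) {a b : α} (h : [a, b] <+ l) {i j : ℕ}
    (hi : i < l.length) (hj : j < l.length) (d : α) (hia : l.getD i d = a) (hjb : l.getD j d = b) :
    i < j := by
  rw [getD_eq_getElem _ _ hi] at hia
  rw [getD_eq_getElem _ _ hj] at hjb
  obtain ⟨f, hf⟩ := sublist_iff_exists_fin_orderEmbedding_get_eq.mp h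
  have hf0 : (f 0 : ℕ) = i := hl.getElem_inj_iff.mp ((hf 0).symm.trans hia.symm)
  have hf1 : (f 1 : ℕ) = j := hl.getElem_inj_iff.mp ((hf 1).symm.trans hjb.symm)
  rw [← hf0, ← hf1]
  exact f.strictMono (show (0 : Fin 2) < 1 by decide)

end List

inductive Dir
  | right | left | up | down

def Dir.vec : Dir → ℤ × ℤ
  | .right => (1, 0) | .left => (-1, 0) | .up => (0, 1) | .down => (0, -1)

def infStitch (c : ℤ × ℤ) : Dir → (ℤ × ℤ) × (ℤ × ℤ)
  | .up | .right => (c, (c.1 + 1, c.2 + 1))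
  | .left | .down => ((c.1 + 1, c.2 + 1), c)

def supStitch (c : ℤ × ℤ) : Dir → (ℤ × ℤ) × (ℤ × ℤ)
  | .up | .left => ((c.1, c.2 + 1), (c.1 + 1, c.2))
  | .right | .down => ((c.1 + 1, c.2), (c.1, c.2 + 1))

theorem diagOf_infStitch (c : ℤ × ℤ) (m : Dir) : diagOf (infStitch c m) = infDiag c := by
  cases m <;> simp [diagOf, infStitch, infDiag, Sym2.eq_swap]

theorem diagOf_supStitch (c : ℤ × ℤ) (m : Dir) : diagOf (supStitch c m) = supDiag c := by
  cases m <;> simp [diagOf, supStitch, supDiag, Sym2.eq_swap]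

theorem adj_infStitch_supStitch (c : ℤ × ℤ) (m : Dir) :
    Adj (infStitch c m).2 (supStitch c m).1 := by
  cases m <;> simp [Adj, infStitch, supStitch]

theorem adj_infStitch_infStitch_add (c : ℤ × ℤ) (m d : Dir) :
    Adj (infStitch c m).2 (infStitch (c + d.vec) d).1 := by
  cases m <;> cases d <;> simp [Adj, infStitch, Dir.vec]

theorem adj_supStitch_add_supStitch (c : ℤ × ℤ) (m d : Dir) :
    Adj (supStitch (c + d.vec) d).2 (supStitch c m).1 := by
  cases m <;> cases d <;> simp [Adj, supStitch, Dir.vec]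

theorem adj_supStitch_add_infStitch_add (c : ℤ × ℤ) {d d' : Dir} (h : d ≠ d') :
    Adj (supStitch (c + d.vec) d).2 (infStitch (c + d'.vec) d').1 := by
  cases d <;> cases d' <;> simp_all [Adj, supStitch, infStitch, Dir.vec]

theorem infDiag_injective : Function.Injective infDiag := by
  intro c c' h
  simp only [infDiag, Sym2.eq_iff, Prod.ext_iff] at h
  ext <;> omega

theorem supDiag_injective : Function.Injective supDiag := by
  intro c c' h
  simp only [supDiag, Sym2.eq_iff, Prod.ext_iff] at h
  ext <;> omega

theorem infDiag_ne_supDiag (c c' : ℤ × ℤ) : infDiag c ≠ supDiag c' := by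
  simp only [infDiag, supDiag, ne_eq, Sym2.eq_iff, Prod.ext_iff]
  omega


open scoped List

structure IsEmbroideryList (S : Finset (ℤ × ℤ)) (L : List ((ℤ × ℤ) × (ℤ × ℤ))) : Prop where
  length_eq : L.length = 2 * S.card
  nodup : (L.map diagOf).Nodup
  exists_cell : ∀ e ∈ L, ∃ c ∈ S, diagOf e = infDiag c ∨ diagOf e = supDiag c
  inf_sublist_sup : ∀ c ∈ S, [infDiag c, supDiag c] <+ L.map diagOf
  isChain : L.IsChain fun e f => Adj e.2 f.1

namespace IsEmbroideryList

variable {S S' : Finset (ℤ × ℤ)} {L L' : List ((ℤ × ℤ) × (ℤ × ℤ))}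

theorem nil : IsEmbroideryList ∅ [] :=
  ⟨rfl, List.nodup_nil, by simp, by simp, List.isChain_nil⟩

theorem infDiag_notMem (h : IsEmbroideryList S L) {c : ℤ × ℤ} (hc : c ∉ S) :
    infDiag c ∉ L.map diagOf := by
  simp only [List.mem_map, not_exists, not_and]
  intro e he hec
  obtain ⟨c', hc', hec' | hec'⟩ := h.exists_cell e he
  · exact hc (infDiag_injective (hec.symm.trans hec').symm ▸ hc')
  · exact infDiag_ne_supDiag c c' (hec.symm.trans hec')

theorem supDiag_notMem (h : IsEmbroideryList S L) {c : ℤ × ℤ} (hc : c ∉ S) :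
    supDiag c ∉ L.map diagOf := by
  simp only [List.mem_map, not_exists, not_and]
  intro e he hec
  obtain ⟨c', hc', hec' | hec'⟩ := h.exists_cell e he
  · exact infDiag_ne_supDiag c' c (hec'.symm.trans hec)
  · exact hc (supDiag_injective (hec.symm.trans hec') ▸ hc')

theorem append (h : IsEmbroideryList S L) (h' : IsEmbroideryList S' L') (hSS' : Disjoint S S')
    (hjoin : ∀ x ∈ L.getLast?, ∀ y ∈ L'.head?, Adj x.2 y.1) :
    IsEmbroideryList (S ∪ S') (L ++ L') where
  length_eq := by
    rw [List.length_append, h.length_eq, h'.length_eq, Finset.card_union_of_disjoint hSS']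
    ring
  nodup := by
    rw [List.map_append, List.nodup_append]
    refine ⟨h.nodup, h'.nodup, ?_⟩
    intro δ hδ δ' hδ' hδδ'
    subst hδδ'
    obtain ⟨e, he, rfl⟩ := List.mem_map.mp hδ
    obtain ⟨c, hc, hec | hec⟩ := h.exists_cell e he <;> rw [hec] at hδ'
    · exact h'.infDiag_notMem (Finset.disjoint_left.mp hSS' hc) hδ'
    · exact h'.supDiag_notMem (Finset.disjoint_left.mp hSS' hc) hδ'
  exists_cell e he := by
    rcases List.mem_append.mp he with he | he
    · obtain ⟨c, hc, hec⟩ := h.exists_cell e he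
      exact ⟨c, Finset.mem_union_left _ hc, hec⟩
    · obtain ⟨c, hc, hec⟩ := h'.exists_cell e he
      exact ⟨c, Finset.mem_union_right _ hc, hec⟩
  inf_sublist_sup c hc := by
    rw [List.map_append]
    rcases Finset.mem_union.mp hc with hc | hc
    · exact (h.inf_sublist_sup c hc).trans (List.sublist_append_left _ _)
    · exact (h'.inf_sublist_sup c hc).trans (List.sublist_append_right _ _)
  isChain := h.isChain.append h'.isChain hjoin

theorem wrap (h : IsEmbroideryList S L) {c : ℤ × ℤ} (hc : c ∉ S) (m : Dir)
    (hhead : ∀ y ∈ L.head?, Adj (infStitch c m).2 y.1)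
    (hlast : ∀ x ∈ L.getLast?, Adj x.2 (supStitch c m).1) :
    IsEmbroideryList (insert c S) (infStitch c m :: (L ++ [supStitch c m])) where
  length_eq := by
    simp only [List.length_cons, List.length_append, List.length_nil, h.length_eq,
      Finset.card_insert_of_notMem hc]
    omega
  nodup := by
    simp only [List.map_cons, List.map_append, List.map_nil, diagOf_infStitch, diagOf_supStitch,
      List.nodup_cons, List.mem_append, List.mem_singleton, List.nodup_append, List.nodup_nil]
    refine ⟨not_or_intro (h.infDiag_notMem hc) (infDiag_ne_supDiag c c), h.nodup, by simp, ?_⟩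
    rintro δ hδ _ rfl rfl
    exact h.supDiag_notMem hc hδ
  exists_cell e he := by
    simp only [List.mem_cons, List.mem_append, List.not_mem_nil, or_false] at he
    rcases he with rfl | he | rfl
    · exact ⟨c, Finset.mem_insert_self c S, Or.inl (diagOf_infStitch c m)⟩
    · obtain ⟨c', hc', hec'⟩ := h.exists_cell e he
      exact ⟨c', Finset.mem_insert_of_mem hc', hec'⟩
    · exact ⟨c, Finset.mem_insert_self c S, Or.inr (diagOf_supStitch c m)⟩
  inf_sublist_sup c' hc' := by
    simp only [List.map_cons, List.map_append, List.map_nil, diagOf_infStitch, diagOf_supStitch]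
    rcases Finset.mem_insert.mp hc' with rfl | hc'
    · exact (List.singleton_sublist.mpr (by simp)).cons_cons _
    · exact ((h.inf_sublist_sup c' hc').trans (List.sublist_append_left _ _)).cons _
  isChain := by
    refine List.isChain_cons.mpr ⟨?_, h.isChain.append (List.isChain_singleton _) ?_⟩
    · cases L with
      | nil => simpa using adj_infStitch_supStitch c m
      | cons y L => simpa using hhead y rfl
    · simpa using hlast

theorem isEmbroidery (h : IsEmbroideryList S L) : IsEmbroidery S (L.getD · default) := by
  have hlen : 2 * S.card = (L.map diagOf).length := by rw [List.length_map, h.length_eq]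
  have hdiag (i : ℕ) : diagOf (L.getD i default) = (L.map diagOf).getD i (diagOf default) :=
    (List.getD_map L default diagOf).symm
  simp only [IsEmbroidery, hdiag, hlen]
  refine ⟨?_, ?_, ?_, ?_, ?_⟩
  · intro i hi
    rw [← hdiag, List.getD_eq_getElem _ _ (by simpa using hi)]
    exact h.exists_cell _ (List.getElem_mem _)
  · exact fun c hc => h.nodup.existsUnique_getD_eq ((h.inf_sublist_sup c hc).subset (by simp)) _
  · exact fun c hc => h.nodup.existsUnique_getD_eq ((h.inf_sublist_sup c hc).subset (by simp)) _
  · exact fun c hc i j hi hj => h.nodup.lt_of_pair_sublist (h.inf_sublist_sup c hc) hi hj _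
  · intro i hi
    rw [List.length_map] at hi
    rw [List.getD_eq_getElem _ _ (by omega), List.getD_eq_getElem _ _ hi]
    exact h.isChain.getElem i hi

theorem isClosedEmbroidery (h : IsEmbroideryList S L) {e f : (ℤ × ℤ) × (ℤ × ℤ)}
    (hhead : L.head? = some e) (hlast : L.getLast? = some f) (hfe : Adj f.2 e.1) :
    IsClosedEmbroidery S (L.getD · default) := by
  refine ⟨h.isEmbroidery, ?_⟩
  rw [List.getLast?_eq_getElem?, h.length_eq] at hlast
  rw [List.head?_eq_getElem?] at hhead
  simpa [List.getD_eq_getElem?_getD, hhead, hlast] using hfe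

end IsEmbroideryList

theorem FourAdj.symm {p q : ℤ × ℤ} (h : FourAdj p q) : FourAdj q p := by
  unfold FourAdj at *
  rw [← h]
  ring

theorem FourAdj.exists_eq_add_vec {c x : ℤ × ℤ} (h : FourAdj c x) :
    ∃ d : Dir, x = c + d.vec := by
  obtain ⟨c1, c2⟩ := c
  obtain ⟨x1, x2⟩ := x
  unfold FourAdj at h
  generalize hu : c1 - x1 = u at h
  generalize hv : c2 - x2 = v at h
  have hu1 : u ^ 2 ≤ 1 := by nlinarith
  have hv1 : v ^ 2 ≤ 1 := by nlinarith
  rw [sq_le_one_iff_abs_le_one, abs_le] at hu1 hv1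
  obtain ⟨hu1, hu2⟩ := hu1
  obtain ⟨hv1, hv2⟩ := hv1
  interval_cases u <;> interval_cases v <;> simp at h
  · exact ⟨.right, by simp [Dir.vec]; omega⟩
  · exact ⟨.up, by simp [Dir.vec]; omega⟩
  · exact ⟨.down, by simp [Dir.vec]; omega⟩
  · exact ⟨.left, by simp [Dir.vec]; omega⟩

def Reach (T : Finset (ℤ × ℤ)) : ℤ × ℤ → ℤ × ℤ → Prop :=
  Relation.ReflTransGen fun a b => a ∈ T ∧ b ∈ T ∧ FourAdj a b

theorem Reach.symm {T : Finset (ℤ × ℤ)} {x y : ℤ × ℤ} (h : Reach T x y) : Reach T y x := by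
  induction h with
  | refl => exact .refl
  | tail _ hstep ih => exact ih.head ⟨hstep.2.1, hstep.1, hstep.2.2.symm⟩

theorem FourConnected.exists_reach_erase {S : Finset (ℤ × ℤ)} (hS : FourConnected S)
    {c : ℤ × ℤ} (hc : c ∈ S) :
    ∀ x ∈ S.erase c, ∃ d : Dir, c + d.vec ∈ S.erase c ∧ Reach (S.erase c) (c + d.vec) x := by
  intro x hx
  induction hS.2 c hc x (Finset.mem_of_mem_erase hx) with
  | refl => exact absurd rfl (Finset.ne_of_mem_erase hx)
  | @tail y x _ hyx ih =>
    obtain ⟨hy, -, hadj⟩ := hyx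
    by_cases hyc : y = c
    · subst hyc
      obtain ⟨d, rfl⟩ := hadj.exists_eq_add_vec
      exact ⟨d, hx, .refl⟩
    · have hy' : y ∈ S.erase c := Finset.mem_erase.mpr ⟨hyc, hy⟩
      obtain ⟨d, hd, hreach⟩ := ih hy'
      exact ⟨d, hd, hreach.tail ⟨hy', hx, hadj⟩⟩

open Classical in
noncomputable def component (T : Finset (ℤ × ℤ)) (r : ℤ × ℤ) : Finset (ℤ × ℤ) :=
  T.filter (Reach T r)

section Component

variable {T : Finset (ℤ × ℤ)} {r x y : ℤ × ℤ}

theorem mem_component : x ∈ component T r ↔ x ∈ T ∧ Reach T r x := by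
  simp [component]

theorem component_subset : component T r ⊆ T :=
  fun _ hx => (mem_component.mp hx).1

theorem self_mem_component (hr : r ∈ T) : r ∈ component T r :=
  mem_component.mpr ⟨hr, .refl⟩

theorem Reach.mem_component (h : Reach T y x) (hy : y ∈ component T r) : x ∈ component T r := by
  rcases h.cases_tail with rfl | ⟨z, hyz, hzx⟩
  · exact hy
  · exact _root_.mem_component.mpr ⟨hzx.2.1, ((_root_.mem_component.mp hy).2.trans hyz).tail hzx⟩

theorem Reach.sdiff_component (h : Reach T y x) (hx : x ∉ component T r) :
    Reach (T \ component T r) y x := by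
  induction h using Relation.ReflTransGen.head_induction_on with
  | refl => exact .refl
  | @head y z hyz hzx ih =>
    have hz : z ∉ component T r := fun hz => hx (Reach.mem_component hzx hz)
    have hy : y ∉ component T r := fun hy => hz (Reach.mem_component (.single hyz) hy)
    exact ih.head ⟨Finset.mem_sdiff.mpr ⟨hyz.1, hy⟩, Finset.mem_sdiff.mpr ⟨hyz.2.1, hz⟩,
      hyz.2.2⟩

theorem forall_reach_sdiff_component {ι : Type*} {f : ι → ℤ × ℤ}
    (hT : ∀ x ∈ T, ∃ i, f i ∈ T ∧ Reach T (f i) x) :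
    ∀ x ∈ T \ component T r,
      ∃ i, f i ∈ T \ component T r ∧ Reach (T \ component T r) (f i) x := by
  intro x hx
  obtain ⟨hxT, hxA⟩ := Finset.mem_sdiff.mp hx
  obtain ⟨i, hi, hreach⟩ := hT x hxT
  exact ⟨i, Finset.mem_sdiff.mpr ⟨hi, fun h => hxA (hreach.mem_component h)⟩,
    hreach.sdiff_component hxA⟩

theorem fourConnected_component (hr : r ∈ T) : FourConnected (component T r) := by
  have hreach : ∀ {x}, Reach T r x → Reach (component T r) r x := by
    intro x h
    induction h with
    | refl => exact .refl
    | tail hrz hzx ih =>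
      exact ih.tail ⟨mem_component.mpr ⟨hzx.1, hrz⟩, mem_component.mpr ⟨hzx.2.1, hrz.tail hzx⟩,
        hzx.2.2⟩
  refine ⟨⟨r, self_mem_component hr⟩, fun p hp q hq => ?_⟩
  exact (hreach (mem_component.mp hp).2).symm.trans (hreach (mem_component.mp hq).2)

end Component

def HasEmbroideryListAt (S : Finset (ℤ × ℤ)) (c : ℤ × ℤ) (m : Dir) : Prop :=
  ∃ L, IsEmbroideryList S L ∧ L.head? = some (infStitch c m) ∧ L.getLast? = some (supStitch c m)

theorem exists_embroideryList_of_forall_reach_neighbour (c : ℤ × ℤ) (T : Finset (ℤ × ℤ))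
    (ih : ∀ A ⊆ T, FourConnected A → ∀ r ∈ A, ∀ m, HasEmbroideryListAt A r m)
    (hT : ∀ x ∈ T, ∃ d : Dir, c + d.vec ∈ T ∧ Reach T (c + d.vec) x) :
    ∃ M, IsEmbroideryList T M ∧
      (∀ y ∈ M.head?, ∃ d : Dir, c + d.vec ∈ T ∧ y = infStitch (c + d.vec) d) ∧
      (∀ x ∈ M.getLast?, ∃ d : Dir, x = supStitch (c + d.vec) d) := by
  induction T using Finset.strongInduction with
  | H T ihT =>
  rcases T.eq_empty_or_nonempty with rfl | ⟨x, hx⟩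
  · exact ⟨[], .nil, by simp, by simp⟩
  obtain ⟨d, hd, -⟩ := hT x hx
  set A := component T (c + d.vec)
  obtain ⟨W, hW, hWhead, hWlast⟩ :=
    ih A component_subset (fourConnected_component hd) _ (self_mem_component hd) d
  obtain ⟨M, hM, hMhead, hMlast⟩ :=
    ihT (T \ A) (Finset.sdiff_ssubset component_subset ⟨_, self_mem_component hd⟩)
      (fun A' hA' => ih A' (hA'.trans Finset.sdiff_subset))
      (forall_reach_sdiff_component (f := fun d : Dir => c + d.vec) hT)
  refine ⟨W ++ M, ?_, ?_, ?_⟩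
  · rw [← Finset.union_sdiff_of_subset (component_subset : A ⊆ T)]
    refine hW.append hM Finset.disjoint_sdiff ?_
    intro x hx y hy
    obtain ⟨d', hd', rfl⟩ := hMhead y hy
    rw [hWlast, Option.mem_some_iff] at hx
    subst hx
    -- the next component hangs off another neighbour of `c`
    refine adj_supStitch_add_infStitch_add c fun hdd' => ?_
    exact (Finset.mem_sdiff.mp hd').2 (hdd' ▸ self_mem_component hd)
  · intro y hy
    rw [List.head?_append, hWhead, Option.some_or, Option.mem_some_iff] at hy
    exact ⟨d, hd, hy.symm⟩
  · intro x hx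
    rw [List.getLast?_append, hWlast] at hx
    rcases Option.or_eq_some_iff.mp hx with hx | ⟨-, hx⟩
    · exact hMlast x hx
    · exact ⟨d, (Option.some_inj.mp hx).symm⟩

theorem hasEmbroideryListAt_of_fourConnected (S : Finset (ℤ × ℤ)) (hS : FourConnected S) :
    ∀ c ∈ S, ∀ m, HasEmbroideryListAt S c m := by
  induction S using Finset.strongInduction with
  | H S ih =>
  intro c hc m
  obtain ⟨M, hM, hhead, hlast⟩ := exists_embroideryList_of_forall_reach_neighbour c (S.erase c)
    (fun A hA => ih A (hA.trans_ssubset (Finset.erase_ssubset hc))) (hS.exists_reach_erase hc)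
  refine ⟨infStitch c m :: (M ++ [supStitch c m]), ?_, rfl,
    by rw [← List.cons_append, List.getLast?_concat]⟩
  rw [← Finset.insert_erase hc]
  refine hM.wrap (Finset.notMem_erase c S) m ?_ ?_
  · intro y hy
    obtain ⟨d, -, rfl⟩ := hhead y hy
    exact adj_infStitch_infStitch_add c m d
  · intro x hx
    obtain ⟨d, rfl⟩ := hlast x hx
    exact adj_supStitch_add_supStitch c m d

/-- Every 4-connected configuration admits a closed embroidery whose first diagonal is
the inferior diagonal of any prescribed cell `(a, b)`, traversed from `(a, b)` to
`(a+1, b+1)`. -/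
theorem fourConnected_closedEmbroidery_from_any_cell (C : Finset (ℤ × ℤ))
    (hC : FourConnected C) (a b : ℤ) (hp : (a, b) ∈ C) :
    ∃ d, IsClosedEmbroidery C d ∧ d 0 = ((a, b), (a + 1, b + 1)) := by
  obtain ⟨L, hL, hhead, hlast⟩ := hasEmbroideryListAt_of_fourConnected C hC (a, b) hp .up
  refine ⟨(L.getD · default), hL.isClosedEmbroidery hhead hlast ?_, ?_⟩
  · simp [Adj, infStitch, supStitch]
  · rw [List.head?_eq_getElem?] at hhead
    simp [List.getD_eq_getElem?_getD, hhead, infStitch]
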